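/- Let n ≥ 1 and let f : ℝ^n → ℝ be bounded and continuous, and let u(x,y) = Γ((n+1)/2)·π^{−(n+1)/2}·∫_{ℝ^n} x·f(η)/((|y−η|² + x²)^{(n+1)/2}) dη for x > 0. Then for every y ∈ ℝ^n, u(x,y) → f(y) as x → 0⁺; i.e., the Poisson integral attains the boundary datum f on the boundary of the half-space. -/

import Mathlib

open MeasureTheory Set Filter Real Topology Module

/-!
The kernel `P_x(ζ) = x / (‖ζ‖² + x²)^((d+1)/2)` satisfies `x^d P_x(x w) = P_1(w)`, so the
substitution `η = y + x w` turns the Poisson integral into `c ∫ P_1(w) f(y + x w) dw`, and dominated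
convergence, with majorant `sup |f| · P_1`, gives the limit `c (∫ P_1) f(y)`. The normalisation
`∫ P_1 = π^((d+1)/2) / Γ((d+1)/2)` comes from subordination to the Gaussian:
`Γ(s) (1 + ‖w‖²)^(-s) = ∫₀^∞ t^(s-1) e^(-(1 + ‖w‖²) t) dt`, and after exchanging the integrals
the `w`-integral is the Gaussian one, `e^(-t) (π/t)^(d/2)`.
-/

section ApproximateIdentity

variable {E : Type*} [NormedAddCommGroup E] [NormedSpace ℝ E] [MeasurableSpace E]
  [OpensMeasurableSpace E] {μ : Measure E}

theorem tendsto_integral_mul_comp_add_smul {k f : E → ℝ} (hk : Integrable k μ)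
    (hf : Continuous f) {C : ℝ} (hC : ∀ η, |f η| ≤ C) (y : E) :
    Tendsto (fun x : ℝ => ∫ w, k w * f (y + x • w) ∂μ) (𝓝 0) (𝓝 ((∫ w, k w ∂μ) * f y)) := by
  rw [← integral_mul_const]
  refine tendsto_integral_filter_of_dominated_convergence (fun w => ‖k w‖ * C)
    (Eventually.of_forall fun x => ?_) (Eventually.of_forall fun x => ?_) (hk.norm.mul_const C)
    (Eventually.of_forall fun w => ?_)
  · exact hk.aestronglyMeasurable.mul (hf.comp (by fun_prop)).aestronglyMeasurable
  · refine Eventually.of_forall fun w => ?_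
    rw [norm_mul, Real.norm_eq_abs (f _)]
    exact mul_le_mul_of_nonneg_left (hC _) (norm_nonneg _)
  · have hline : Tendsto (fun x : ℝ => y + x • w) (𝓝 0) (𝓝 y) := by
      have hcont : Continuous fun x : ℝ => y + x • w := by fun_prop
      simpa using hcont.tendsto 0
    exact ((hf.tendsto y).comp hline).const_mul (k w)

end ApproximateIdentity

section GammaSubordination

theorem integrable_rpow_mul_exp_neg_one_add_norm_sq_mul {E : Type*} [NormedAddCommGroup E]
    [NormedSpace ℝ E] [FiniteDimensional ℝ E] [MeasurableSpace E] [BorelSpace E]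
    (μ : Measure E) [μ.IsAddHaarMeasure] {s : ℝ} (hs : finrank ℝ E / 2 < s) :
    Integrable (Function.uncurry fun (w : E) (t : ℝ) => t ^ (s - 1) * rexp (-((1 + ‖w‖ ^ 2) * t)))
      (μ.prod (volume.restrict (Ioi 0))) := by
  have hs0 : 0 < s := lt_of_le_of_lt (by positivity) hs
  have hGamma : ∀ w : E, ∫ t in Ioi 0, t ^ (s - 1) * rexp (-((1 + ‖w‖ ^ 2) * t))
      = (1 + ‖w‖ ^ 2) ^ (-(2 * s) / 2) * Gamma s := fun w => by
    rw [integral_rpow_mul_exp_neg_mul_Ioi hs0 (by positivity), one_div, inv_rpow (by positivity),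
      ← rpow_neg (by positivity), neg_div, mul_div_cancel_left₀ _ two_ne_zero]
  have hnonneg : ∀ w : E, ∀ t ∈ Ioi (0 : ℝ), 0 ≤ t ^ (s - 1) * rexp (-((1 + ‖w‖ ^ 2) * t)) :=
    fun w t ht => by have : (0 : ℝ) < t := ht; positivity
  refine (integrable_prod_iff (by fun_prop)).2 ⟨Eventually.of_forall fun w => ?_, ?_⟩
  · refine Integrable.of_integral_ne_zero ?_
    simp only [Function.uncurry_apply_pair, hGamma]
    exact (mul_pos (by positivity) (Gamma_pos_of_pos hs0)).ne'
  · have hnorm : ∀ w : E, ∫ t in Ioi 0, ‖t ^ (s - 1) * rexp (-((1 + ‖w‖ ^ 2) * t))‖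
        = (1 + ‖w‖ ^ 2) ^ (-(2 * s) / 2) * Gamma s := fun w => by
      rw [← hGamma]
      exact setIntegral_congr_fun measurableSet_Ioi fun t ht =>
        Real.norm_of_nonneg (hnonneg w t ht)
    simp only [Function.uncurry_apply_pair, hnorm]
    exact (integrable_rpow_neg_one_add_norm_sq (by linarith)).mul_const _

variable {V : Type*} [NormedAddCommGroup V] [InnerProductSpace ℝ V] [FiniteDimensional ℝ V]
  [MeasurableSpace V] [BorelSpace V]

theorem integral_rpow_mul_exp_neg_one_add_norm_sq_mul (s : ℝ) {t : ℝ} (ht : 0 < t) :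
    ∫ w : V, t ^ (s - 1) * rexp (-((1 + ‖w‖ ^ 2) * t))
      = π ^ (finrank ℝ V / 2 : ℝ) * (t ^ (s - finrank ℝ V / 2 - 1) * rexp (-(1 * t))) := by
  have hsplit : ∀ w : V, t ^ (s - 1) * rexp (-((1 + ‖w‖ ^ 2) * t))
      = t ^ (s - 1) * rexp (-t) * rexp (-t * ‖w‖ ^ 2) := fun w => by
    rw [mul_assoc, ← exp_add]; ring_nf
  simp_rw [hsplit]
  rw [integral_const_mul, GaussianFourier.integral_rexp_neg_mul_sq_norm ht,
    div_rpow pi_pos.le ht.le, sub_right_comm s, rpow_sub ht (s - 1), one_mul]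
  ring

theorem integral_one_add_norm_sq_rpow_neg {s : ℝ} (hs : finrank ℝ V / 2 < s) :
    ∫ w : V, (1 + ‖w‖ ^ 2) ^ (-s)
      = π ^ (finrank ℝ V / 2 : ℝ) * Gamma (s - finrank ℝ V / 2) / Gamma s := by
  have hs0 : 0 < s := lt_of_le_of_lt (by positivity) hs
  rw [eq_div_iff (Gamma_pos_of_pos hs0).ne', ← integral_mul_const]
  calc ∫ w : V, (1 + ‖w‖ ^ 2) ^ (-s) * Gamma s
      = ∫ w : V, ∫ t in Ioi 0, t ^ (s - 1) * rexp (-((1 + ‖w‖ ^ 2) * t)) := by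
        congr 1 with w
        rw [integral_rpow_mul_exp_neg_mul_Ioi hs0 (by positivity), one_div,
          inv_rpow (by positivity), rpow_neg (by positivity)]
    _ = ∫ t in Ioi 0, ∫ w : V, t ^ (s - 1) * rexp (-((1 + ‖w‖ ^ 2) * t)) :=
        integral_integral_swap (integrable_rpow_mul_exp_neg_one_add_norm_sq_mul volume hs)
    _ = ∫ t in Ioi 0,
          π ^ (finrank ℝ V / 2 : ℝ) * (t ^ (s - finrank ℝ V / 2 - 1) * rexp (-(1 * t))) :=
        setIntegral_congr_fun measurableSet_Ioi fun t ht =>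
          integral_rpow_mul_exp_neg_one_add_norm_sq_mul s ht
    _ = π ^ (finrank ℝ V / 2 : ℝ) * Gamma (s - finrank ℝ V / 2) := by
        rw [integral_const_mul, integral_rpow_mul_exp_neg_mul_Ioi (by linarith) one_pos,
          div_one, one_rpow, one_mul]

end GammaSubordination

section PoissonKernel

variable {E : Type*} [NormedAddCommGroup E] [NormedSpace ℝ E]

/-- The Poisson kernel of the half-space `(0, ∞) × E`, without the constant
`Γ((d+1)/2) π^(-(d+1)/2)` that makes its integral `1`. -/
noncomputable def halfSpacePoissonKernel (x : ℝ) (ζ : E) : ℝ :=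
  x / (‖ζ‖ ^ 2 + x ^ 2) ^ ((finrank ℝ E + 1 : ℝ) / 2)

theorem halfSpacePoissonKernel_one (w : E) :
    halfSpacePoissonKernel 1 w = (1 + ‖w‖ ^ 2) ^ (-(finrank ℝ E + 1 : ℝ) / 2) := by
  rw [halfSpacePoissonKernel, one_pow, add_comm, neg_div, rpow_neg (by positivity), one_div]

theorem pow_finrank_mul_halfSpacePoissonKernel_smul {x : ℝ} (hx : 0 < x) (w : E) :
    x ^ finrank ℝ E * halfSpacePoissonKernel x (x • w) = halfSpacePoissonKernel 1 w := by
  have hsq : ‖x • w‖ ^ 2 + x ^ 2 = x ^ 2 * (‖w‖ ^ 2 + 1 ^ 2) := by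
    rw [norm_smul, Real.norm_eq_abs, abs_of_pos hx]; ring
  have hpow : (x ^ 2) ^ ((finrank ℝ E + 1 : ℝ) / 2) = x ^ finrank ℝ E * x := by
    rw [← rpow_natCast x 2, ← rpow_mul hx.le,
      show ((2 : ℕ) : ℝ) * ((finrank ℝ E + 1 : ℝ) / 2) = finrank ℝ E + 1 by push_cast; ring,
      rpow_add hx, rpow_natCast, rpow_one]
  have hpos : 0 < (‖w‖ ^ 2 + 1 ^ 2) ^ ((finrank ℝ E + 1 : ℝ) / 2) := by positivity
  rw [halfSpacePoissonKernel, halfSpacePoissonKernel, hsq,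
    mul_rpow (by positivity) (by positivity), hpow]
  field_simp

variable [MeasurableSpace E] [BorelSpace E] [FiniteDimensional ℝ E] (μ : Measure E)
  [μ.IsAddHaarMeasure]

theorem integrable_halfSpacePoissonKernel_one :
    Integrable (halfSpacePoissonKernel 1 : E → ℝ) μ := by
  rw [show (halfSpacePoissonKernel 1 : E → ℝ) = _ from funext halfSpacePoissonKernel_one]
  exact integrable_rpow_neg_one_add_norm_sq (lt_add_one _)

theorem integral_halfSpacePoissonKernel_sub_mul {x : ℝ} (hx : 0 < x) (f : E → ℝ) (y : E) :
    ∫ η, halfSpacePoissonKernel x (y - η) * f η ∂μ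
      = ∫ w, halfSpacePoissonKernel 1 w * f (y + x • w) ∂μ := by
  calc ∫ η, halfSpacePoissonKernel x (y - η) * f η ∂μ
      = ∫ ζ, halfSpacePoissonKernel x ζ * f (y + ζ) ∂μ := by
        rw [← integral_add_left_eq_self _ y]
        simp [halfSpacePoissonKernel]
    _ = x ^ finrank ℝ E * ∫ w, halfSpacePoissonKernel x (x • w) * f (y + x • w) ∂μ := by
        rw [Measure.integral_comp_smul_of_nonneg μ
            (fun ζ => halfSpacePoissonKernel x ζ * f (y + ζ)) x (hR := hx.le),
          smul_eq_mul, ← mul_assoc, mul_inv_cancel₀ (by positivity), one_mul]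
    _ = ∫ w, halfSpacePoissonKernel 1 w * f (y + x • w) ∂μ := by
        rw [← integral_const_mul]
        simp_rw [← mul_assoc, pow_finrank_mul_halfSpacePoissonKernel_smul hx]

end PoissonKernel

theorem integral_halfSpacePoissonKernel_one {V : Type*} [NormedAddCommGroup V]
    [InnerProductSpace ℝ V] [FiniteDimensional ℝ V] [MeasurableSpace V] [BorelSpace V] :
    ∫ w : V, halfSpacePoissonKernel 1 w
      = π ^ ((finrank ℝ V + 1 : ℝ) / 2) / Gamma ((finrank ℝ V + 1 : ℝ) / 2) := by
  simp_rw [halfSpacePoissonKernel_one, neg_div]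
  rw [integral_one_add_norm_sq_rpow_neg (by linarith),
    show (finrank ℝ V + 1 : ℝ) / 2 - finrank ℝ V / 2 = 1 / 2 by ring, Gamma_one_half_eq,
    sqrt_eq_rpow, ← rpow_add pi_pos]
  ring_nf

theorem stmt10_general (n : ℕ) (f : EuclideanSpace ℝ (Fin n) → ℝ)
    (hf_cont : Continuous f) (hf_bdd : ∃ C, ∀ η, |f η| ≤ C)
    (u : ℝ → EuclideanSpace ℝ (Fin n) → ℝ)
    (hu : ∀ (x : ℝ) (y : EuclideanSpace ℝ (Fin n)), u x y =
      Real.Gamma (((n : ℝ) + 1) / 2) * Real.pi ^ (-(((n : ℝ) + 1) / 2)) *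
        ∫ η : EuclideanSpace ℝ (Fin n),
          x * f η / ((‖y - η‖ ^ 2 + x ^ 2) ^ (((n : ℝ) + 1) / 2))) :
    ∀ y : EuclideanSpace ℝ (Fin n),
      Tendsto (fun x => u x y) (nhdsWithin 0 (Set.Ioi 0)) (nhds (f y)) := by
  intro y
  obtain ⟨C, hC⟩ := hf_bdd
  have hrank : (finrank ℝ (EuclideanSpace ℝ (Fin n)) : ℝ) = n := by
    rw [finrank_euclideanSpace_fin]
  have hu_rescaled : ∀ x ∈ Ioi (0 : ℝ), u x y = Gamma ((n + 1) / 2) * π ^ (-((n + 1) / 2 : ℝ)) *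
      ∫ w, halfSpacePoissonKernel 1 w * f (y + x • w) := fun x hx => by
    rw [hu, ← integral_halfSpacePoissonKernel_sub_mul volume hx]
    simp only [halfSpacePoissonKernel, hrank, mul_div_right_comm]
  have hconst : Gamma ((n + 1) / 2) * π ^ (-((n + 1) / 2 : ℝ)) *
      ((∫ w : EuclideanSpace ℝ (Fin n), halfSpacePoissonKernel 1 w) * f y) = f y := by
    have hGamma : Gamma ((n + 1) / 2) ≠ 0 := (Gamma_pos_of_pos (by positivity)).ne'
    have hpi : π ^ ((n + 1) / 2 : ℝ) ≠ 0 := (rpow_pos_of_pos pi_pos _).ne'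
    rw [integral_halfSpacePoissonKernel_one, hrank, rpow_neg pi_pos.le]
    field_simp
  refine Tendsto.congr' (eventually_nhdsWithin_of_forall fun x hx => (hu_rescaled x hx).symm) ?_
  rw [← hconst]
  exact ((tendsto_integral_mul_comp_add_smul (integrable_halfSpacePoissonKernel_one volume)
    hf_cont hC y).const_mul _).mono_left nhdsWithin_le_nhds

/-- for `f : ℝⁿ → ℝ` bounded and continuous, the Poisson integral
`u(x,y) = Γ((n+1)/2)·π^{−(n+1)/2}·∫_{ℝⁿ} x·f(η)/((|y−η|²+x²)^{(n+1)/2}) dη`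
attains the boundary datum: `u(x,y) → f(y)` as `x → 0⁺`, for every `y`. -/
theorem stmt10 (n : ℕ) (hn : 1 ≤ n) (f : EuclideanSpace ℝ (Fin n) → ℝ)
    (hf_cont : Continuous f) (hf_bdd : ∃ C, ∀ η, |f η| ≤ C)
    (u : ℝ → EuclideanSpace ℝ (Fin n) → ℝ)
    (hu : ∀ (x : ℝ) (y : EuclideanSpace ℝ (Fin n)), u x y =
      Real.Gamma (((n : ℝ) + 1) / 2) * Real.pi ^ (-(((n : ℝ) + 1) / 2)) *
        ∫ η : EuclideanSpace ℝ (Fin n),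
          x * f η / ((‖y - η‖ ^ 2 + x ^ 2) ^ (((n : ℝ) + 1) / 2))) :
    ∀ y : EuclideanSpace ℝ (Fin n),
      Tendsto (fun x => u x y) (nhdsWithin 0 (Set.Ioi 0)) (nhds (f y)) :=
  stmt10_general n f hf_cont hf_bdd u hu
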